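/- arXiv:cs/0604086 — 5 statements merged into one kernel-verified Lean document; each statement's English description precedes it below -/
import Mathlib

section
/- A locally stratified extended logic program has at most one answer set. That is, if there exists a mapping λ from ground literals to natural numbers such that for every rule r, λ(head(r)) ≥ λ(L) for all L ∈ body+(r) and λ(head(r)) > λ(L) for all L ∈ body−(r), then Π has at most one answer set. -/
universe u

/-- A ground literal: an atom or a classically negated atom. -/
inductive Lit (α : Type u) : Type u
  | pos : α → Lit α
  | neg : α → Lit α

namespace Lit
/-- The complementary literal. -/
def compl {α : Type u} : Lit α → Lit α
  | pos a => neg a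
  | neg a => pos a
/-- The underlying atom of a literal. -/
def atom {α : Type u} : Lit α → α
  | pos a => a
  | neg a => a
end Lit

/-- A ground rule  head ← pos, not neg  of an extended logic program. -/
structure Rule (α : Type u) : Type u where
  head : Lit α
  pos : Set (Lit α)
  neg : Set (Lit α)

/-- An interpretation is consistent if it contains no complementary pair. -/
def Consistent {α : Type u} (X : Set (Lit α)) : Prop :=
  ∀ a : α, ¬ (Lit.pos a ∈ X ∧ Lit.neg a ∈ X)

/-- The body of a rule is true in `X`. -/
def Rule.bodyTrue {α : Type u} (r : Rule α) (X : Set (Lit α)) : Prop :=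
  r.pos ⊆ X ∧ r.neg ∩ X = ∅

/-- `X` is a model of the program `P`: every rule is true in `X`. -/
def IsModel {α : Type u} (X : Set (Lit α)) (P : Set (Rule α)) : Prop :=
  ∀ r ∈ P, r.bodyTrue X → r.head ∈ X

/-- The Gelfond-Lifschitz reduct of `P` relative to `X`. -/
def reduct {α : Type u} (P : Set (Rule α)) (X : Set (Lit α)) : Set (Rule α) :=
  {r' | ∃ r ∈ P, r.neg ∩ X = ∅ ∧ r' = ⟨r.head, r.pos, ∅⟩}

/-- `X` is an answer set of `P`: a consistent, ⊆-minimal model of the reduct. -/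
def AnswerSet {α : Type u} (P : Set (Rule α)) (X : Set (Lit α)) : Prop :=
  Consistent X ∧ IsModel X (reduct P X) ∧
    ∀ Y, Y ⊆ X → IsModel Y (reduct P X) → Y = X

/-- The generating rules of `X` with respect to `P`. -/
def GR {α : Type u} (P : Set (Rule α)) (X : Set (Lit α)) : Set (Rule α) :=
  {r | r ∈ P ∧ r.bodyTrue X}

/-- Step lemma: if two answer sets agree on literals of level `< n`, then every
literal of level `n` in `X` is also in `Y`. -/
lemma step_level {α : Type u} (P : Set (Rule α)) (lam : Lit α → ℕ)
    (hstrat : ∀ r ∈ P, (∀ L ∈ r.pos, lam L ≤ lam r.head) ∧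
                        (∀ L ∈ r.neg, lam L < lam r.head))
    (X Y : Set (Lit α)) (hX : AnswerSet P X) (hY : AnswerSet P Y) (n : ℕ)
    (agree : ∀ L, lam L < n → (L ∈ X ↔ L ∈ Y)) :
    ∀ L ∈ X, lam L = n → L ∈ Y := by
  set W : Set (Lit α) := {L | L ∈ X ∧ (lam L = n → L ∈ Y)} with hW
  have hWX : W ⊆ X := fun L hL => hL.1
  have hmodel : IsModel W (reduct P X) := by
    rintro r' ⟨r, hrP, hnegX, rfl⟩ ⟨hpos, _⟩
    have hposX : r.pos ⊆ X := fun L hL => (hpos hL).1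
    have hheadX : r.head ∈ X := by
      refine hX.2.1 ⟨r.head, r.pos, ∅⟩ ⟨r, hrP, hnegX, rfl⟩ ⟨hposX, ?_⟩
      exact Set.empty_inter X
    refine ⟨hheadX, fun hlev => ?_⟩
    -- show r.head ∈ Y using Y's model property for the reduct w.r.t. Y
    have hnegY : r.neg ∩ Y = ∅ := by
      ext L
      simp only [Set.mem_inter_iff, Set.mem_empty_iff_false, iff_false, not_and]
      intro hLneg hLY
      have hlt : lam L < n := hlev ▸ (hstrat r hrP).2 L hLneg
      have hLX : L ∈ X := (agree L hlt).mpr hLY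
      have : L ∈ r.neg ∩ X := ⟨hLneg, hLX⟩
      simp [hnegX] at this
    have hposY : r.pos ⊆ Y := by
      intro L hL
      have hle : lam L ≤ n := hlev ▸ (hstrat r hrP).1 L hL
      rcases lt_or_eq_of_le hle with h | h
      · exact (agree L h).mp (hpos hL).1
      · exact (hpos hL).2 h
    refine hY.2.1 ⟨r.head, r.pos, ∅⟩ ⟨r, hrP, hnegY, rfl⟩ ⟨hposY, ?_⟩
    exact Set.empty_inter Y
  have : W = X := hX.2.2 W hWX hmodel
  intro L hLX hlev
  have : L ∈ W := this ▸ hLX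
  exact this.2 hlev

/-- A locally stratified extended logic program has at most one answer set. -/
theorem locallyStratified_at_most_one_answerSet {α : Type u} (P : Set (Rule α))
    (hfin : P.Finite) (lam : Lit α → ℕ)
    (hstrat : ∀ r ∈ P, (∀ L ∈ r.pos, lam L ≤ lam r.head) ∧
                        (∀ L ∈ r.neg, lam L < lam r.head))
    (X Y : Set (Lit α)) (hX : AnswerSet P X) (hY : AnswerSet P Y) : X = Y := by
  have agree : ∀ n L, lam L < n → (L ∈ X ↔ L ∈ Y) := by
    intro n
    induction n with
    | zero => intro L h; omega
    | succ n ih =>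
      intro L h
      rcases Nat.lt_succ_iff_lt_or_eq.mp h with h | h
      · exact ih L h
      · constructor
        · intro hLX; exact step_level P lam hstrat X Y hX hY n ih L hLX h
        · intro hLY
          exact step_level P lam (fun r hr => hstrat r hr) Y X hY hX n
            (fun L' h' => (ih L' h').symm) L hLY h
  ext L
  exact agree (lam L + 1) L (Nat.lt_succ_self _)
end

section
/- Splitting theorem for independent programs: let Π1 and Π2 be extended logic programs such that no predicate symbol occurring in a rule head of Π2 occurs anywhere in Π1 (Π1 is independent of Π2). Then a set X of ground literals is an answer set of Π1 ∪ Π2 if and only if there exists an answer set Y of Π1 such that X is an answer set of Π2 ∪ Y (where Y is added as a set of facts). -/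
universe u

/-! ### Auxiliary lemmas for the splitting theorem -/

/-- The "bottom" literals: those whose predicate differs from every head
predicate of `P2`. -/
def Ubot {α π : Type u} (pred : α → π) (P2 : Set (Rule α)) : Set (Lit α) :=
  {L | ∀ r2 ∈ P2, pred L.atom ≠ pred r2.head.atom}

lemma reduct_union {α : Type u} (P Q : Set (Rule α)) (X : Set (Lit α)) :
    reduct (P ∪ Q) X = reduct P X ∪ reduct Q X := by
  ext r'
  constructor
  · rintro ⟨r, hr | hr, hn, rfl⟩
    · exact Or.inl ⟨r, hr, hn, rfl⟩
    · exact Or.inr ⟨r, hr, hn, rfl⟩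
  · rintro (⟨r, hr, hn, rfl⟩ | ⟨r, hr, hn, rfl⟩)
    · exact ⟨r, Or.inl hr, hn, rfl⟩
    · exact ⟨r, Or.inr hr, hn, rfl⟩

lemma reduct_facts {α : Type u} (Y X : Set (Lit α)) :
    reduct ((fun L => (⟨L, ∅, ∅⟩ : Rule α)) '' Y) X
      = (fun L => (⟨L, ∅, ∅⟩ : Rule α)) '' Y := by
  ext r'
  constructor
  · rintro ⟨r, ⟨L, hL, rfl⟩, hn, rfl⟩
    exact ⟨L, hL, rfl⟩
  · rintro ⟨L, hL, rfl⟩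
    exact ⟨⟨L, ∅, ∅⟩, ⟨L, hL, rfl⟩, Set.empty_inter X, rfl⟩

lemma isModel_union {α : Type u} {Z : Set (Lit α)} {A B : Set (Rule α)} :
    IsModel Z (A ∪ B) ↔ IsModel Z A ∧ IsModel Z B := by
  constructor
  · exact fun h => ⟨fun r hr => h r (Or.inl hr), fun r hr => h r (Or.inr hr)⟩
  · rintro ⟨hA, hB⟩ r (hr | hr)
    · exact hA r hr
    · exact hB r hr

lemma bodyTrue_mk {α : Type u} (h : Lit α) (p Z : Set (Lit α)) :
    (⟨h, p, ∅⟩ : Rule α).bodyTrue Z ↔ p ⊆ Z := by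
  simp [Rule.bodyTrue]

lemma reduct_congr {α : Type u} {P : Set (Rule α)} {X Y : Set (Lit α)}
    (h : ∀ r ∈ P, (r.neg ∩ X = ∅ ↔ r.neg ∩ Y = ∅)) :
    reduct P X = reduct P Y := by
  ext r'
  constructor
  · rintro ⟨r, hr, hn, rfl⟩; exact ⟨r, hr, (h r hr).1 hn, rfl⟩
  · rintro ⟨r, hr, hn, rfl⟩; exact ⟨r, hr, (h r hr).2 hn, rfl⟩

/-- Splitting theorem for independent programs: if no predicate symbol occurring
in a rule head of `P2` occurs anywhere in `P1`, then `X` is an answer set of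
`P1 ∪ P2` iff `X` is an answer set of `P2 ∪ Y` for some answer set `Y` of `P1`
(added as facts). Here `pred` assigns to each atom its predicate symbol. -/
theorem splitting_independent {α π : Type u} (pred : α → π)
    (P1 P2 : Set (Rule α)) (h1 : P1.Finite) (h2 : P2.Finite)
    (hind : ∀ r2 ∈ P2, ∀ r1 ∈ P1,
      ∀ L ∈ ({r1.head} ∪ r1.pos ∪ r1.neg : Set (Lit α)),
        pred L.atom ≠ pred r2.head.atom)
    (X : Set (Lit α)) :
    AnswerSet (P1 ∪ P2) X ↔
      ∃ Y : Set (Lit α), AnswerSet P1 Y ∧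
        AnswerSet (P2 ∪ (fun L => (⟨L, ∅, ∅⟩ : Rule α)) '' Y) X := by
  classical
  set U : Set (Lit α) := Ubot pred P2 with hUdef
  have hU1 : ∀ r ∈ P1, r.head ∈ U ∧ r.pos ⊆ U ∧ r.neg ⊆ U := by
    intro r hr
    refine ⟨?_, ?_, ?_⟩
    · exact fun r2 hr2 => hind r2 hr2 r hr r.head (by simp)
    · intro L hL
      exact fun r2 hr2 => hind r2 hr2 r hr L (Or.inl (Or.inr hL))
    · intro L hL
      exact fun r2 hr2 => hind r2 hr2 r hr L (Or.inr hL)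
  have hU2 : ∀ r ∈ P2, r.head ∉ U := fun r hr h => h r hr rfl
  -- reduct of P1 only depends on the U-part of the context
  have hred1 : ∀ W : Set (Lit α), reduct P1 W = reduct P1 (W ∩ U) := by
    intro W
    refine reduct_congr fun r hr => ?_
    have hnU := (hU1 r hr).2.2
    constructor
    · intro h
      rw [Set.eq_empty_iff_forall_notMem] at h ⊢
      exact fun L hL => h L ⟨hL.1, hL.2.1⟩
    · intro h
      rw [Set.eq_empty_iff_forall_notMem] at h ⊢
      exact fun L hL => h L ⟨hL.1, hL.2, hnU hL.1⟩
  constructor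
  · rintro ⟨hcons, hmod, hmin⟩
    rw [reduct_union, isModel_union] at hmod
    obtain ⟨hmod1, hmod2⟩ := hmod
    refine ⟨X ∩ U, ⟨?_, ?_, ?_⟩, ?_, ?_, ?_⟩
    · -- consistency of Y
      exact fun a h => hcons a ⟨h.1.1, h.2.1⟩
    · -- Y models reduct P1 Y
      rw [← hred1]
      rintro r' ⟨r, hr, hn, rfl⟩ ⟨hpos, -⟩
      have hhX : r.head ∈ X := hmod1 ⟨r.head, r.pos, ∅⟩ ⟨r, hr, hn, rfl⟩
        ((bodyTrue_mk _ _ _).2 (hpos.trans Set.inter_subset_left))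
      exact ⟨hhX, (hU1 r hr).1⟩
    · -- minimality for Y
      intro Z hZY hZmod
      rw [← hred1] at hZmod
      have hWX : Z ∪ (X \ U) ⊆ X :=
        Set.union_subset (hZY.trans Set.inter_subset_left) Set.diff_subset
      have hWmod : IsModel (Z ∪ (X \ U)) (reduct (P1 ∪ P2) X) := by
        rw [reduct_union]
        refine isModel_union.2 ⟨?_, ?_⟩
        · rintro r' ⟨r, hr, hn, rfl⟩ ⟨hpos, -⟩
          have hposZ : r.pos ⊆ Z := by
            intro L hL
            rcases hpos hL with h | h
            · exact h
            · exact absurd ((hU1 r hr).2.1 hL) h.2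
          exact Or.inl (hZmod ⟨r.head, r.pos, ∅⟩ ⟨r, hr, hn, rfl⟩
            ((bodyTrue_mk _ _ _).2 hposZ))
        · rintro r' ⟨r, hr, hn, rfl⟩ ⟨hpos, -⟩
          have hhX : r.head ∈ X := hmod2 ⟨r.head, r.pos, ∅⟩ ⟨r, hr, hn, rfl⟩
            ((bodyTrue_mk _ _ _).2 (hpos.trans hWX))
          exact Or.inr ⟨hhX, hU2 r hr⟩
      have hW : Z ∪ (X \ U) = X := hmin _ hWX hWmod
      refine hZY.antisymm ?_
      intro L hL
      have hLW : L ∈ Z ∪ (X \ U) := by rw [hW]; exact hL.1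
      rcases hLW with h | h
      · exact h
      · exact absurd hL.2 h.2
    · -- consistency of X
      exact hcons
    · -- X models reduct (P2 ∪ facts Y) X
      rw [reduct_union, reduct_facts]
      refine isModel_union.2 ⟨hmod2, ?_⟩
      rintro r' ⟨L, hL, rfl⟩ -
      exact hL.1
    · -- minimality for X
      intro Z hZX hZmod
      rw [reduct_union, reduct_facts, isModel_union] at hZmod
      obtain ⟨hZ2, hZF⟩ := hZmod
      have hYZ : X ∩ U ⊆ Z := by
        intro L hL
        exact hZF ⟨L, ∅, ∅⟩ ⟨L, hL, rfl⟩ ((bodyTrue_mk _ _ _).2 (Set.empty_subset Z))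
      refine hmin Z hZX ?_
      rw [reduct_union]
      refine isModel_union.2 ⟨?_, hZ2⟩
      rintro r' ⟨r, hr, hn, rfl⟩ ⟨hpos, -⟩
      have hhX : r.head ∈ X := hmod1 ⟨r.head, r.pos, ∅⟩ ⟨r, hr, hn, rfl⟩
        ((bodyTrue_mk _ _ _).2 (hpos.trans hZX))
      exact hYZ ⟨hhX, (hU1 r hr).1⟩
  · rintro ⟨Y, ⟨hYcons, hYmod, hYmin⟩, hXcons, hXmod, hXmin⟩
    rw [reduct_union, reduct_facts, isModel_union] at hXmod
    obtain ⟨hX2, hXF⟩ := hXmod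
    -- Y ⊆ U
    have hYU : Y ⊆ U := by
      have : Y ∩ U = Y := by
        refine hYmin (Y ∩ U) Set.inter_subset_left ?_
        rw [hred1 Y]
        rintro r' ⟨r, hr, hn, rfl⟩ ⟨hpos, -⟩
        have hhY : r.head ∈ Y := hYmod ⟨r.head, r.pos, ∅⟩
          (by rw [hred1 Y]; exact ⟨r, hr, hn, rfl⟩)
          ((bodyTrue_mk _ _ _).2 (hpos.trans Set.inter_subset_left))
        exact ⟨hhY, (hU1 r hr).1⟩
      rw [← this]; exact Set.inter_subset_right
    -- Y ⊆ X
    have hYX : Y ⊆ X := fun L hL =>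
      hXF ⟨L, ∅, ∅⟩ ⟨L, hL, rfl⟩ ((bodyTrue_mk _ _ _).2 (Set.empty_subset X))
    -- X ∩ U = Y
    have hXU : X ∩ U = Y := by
      have hWX : Y ∪ (X \ U) ⊆ X := Set.union_subset hYX Set.diff_subset
      have hW : Y ∪ (X \ U) = X := by
        refine hXmin _ hWX ?_
        rw [reduct_union, reduct_facts]
        refine isModel_union.2 ⟨?_, ?_⟩
        · rintro r' ⟨r, hr, hn, rfl⟩ ⟨hpos, -⟩
          have hhX : r.head ∈ X := hX2 ⟨r.head, r.pos, ∅⟩ ⟨r, hr, hn, rfl⟩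
            ((bodyTrue_mk _ _ _).2 (hpos.trans hWX))
          exact Or.inr ⟨hhX, hU2 r hr⟩
        · rintro r' ⟨L, hL, rfl⟩ -
          exact Or.inl hL
      refine Set.Subset.antisymm ?_ (Set.subset_inter hYX hYU)
      intro L hL
      have hLW : L ∈ Y ∪ (X \ U) := by rw [hW]; exact hL.1
      rcases hLW with h | h
      · exact h
      · exact absurd hL.2 h.2
    have hr1XY : reduct P1 X = reduct P1 Y := by rw [hred1 X, hXU]
    refine ⟨hXcons, ?_, ?_⟩
    · rw [reduct_union]
      refine isModel_union.2 ⟨?_, hX2⟩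
      rw [hr1XY]
      rintro r' ⟨r, hr, hn, rfl⟩ ⟨hpos, -⟩
      have hposY : r.pos ⊆ Y := by
        rw [← hXU]; exact Set.subset_inter hpos ((hU1 r hr).2.1)
      exact hYX (hYmod ⟨r.head, r.pos, ∅⟩ ⟨r, hr, hn, rfl⟩ ((bodyTrue_mk _ _ _).2 hposY))
    · intro Z hZX hZmod
      rw [reduct_union, isModel_union] at hZmod
      obtain ⟨hZ1, hZ2⟩ := hZmod
      have hZU : Z ∩ U = Y := by
        refine hYmin (Z ∩ U) (by rw [← hXU]; exact Set.inter_subset_inter_left _ hZX) ?_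
        rw [← hr1XY]
        rintro r' ⟨r, hr, hn, rfl⟩ ⟨hpos, -⟩
        exact ⟨hZ1 ⟨r.head, r.pos, ∅⟩ ⟨r, hr, hn, rfl⟩
          ((bodyTrue_mk _ _ _).2 (hpos.trans Set.inter_subset_left)), (hU1 r hr).1⟩
      refine hXmin Z hZX ?_
      rw [reduct_union, reduct_facts]
      refine isModel_union.2 ⟨hZ2, ?_⟩
      rintro r' ⟨L, hL, rfl⟩ -
      rw [← hZU] at hL
      exact hL.1
end

section
/- For any binary relation ⊴ on a set, define r <' r' iff r ⊴ r' and not r' ⊴* r, where ⊴* is the transitive closure of ⊴. Then the transitive closure < of <' is a strict partial order (irreflexive and transitive). -/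
/-- From an arbitrary relation `le`, remove the pairs lying on a cycle:
`r <' r'` iff `r ⊴ r'` and not `r' ⊴* r`. -/
def ltPrime {R : Type*} (le : R → R → Prop) (a b : R) : Prop :=
  le a b ∧ ¬ Relation.TransGen le b a

/-- The final preference relation: the transitive closure of `<'`. -/
def finalLt {R : Type*} (le : R → R → Prop) : R → R → Prop :=
  Relation.TransGen (ltPrime le)

/-- For any binary relation `le`, the transitive closure of the cycle-free part
`<'` is a strict partial order (irreflexive and transitive). -/
theorem finalLt_strict_partial_order {R : Type*} (le : R → R → Prop) :
    (∀ a, ¬ finalLt le a a) ∧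
    (∀ a b c, finalLt le a b → finalLt le b c → finalLt le a c) := by
  constructor
  · intro a h
    cases h with
    | single h => exact h.2 (Relation.TransGen.single h.1)
    | tail h₁ h₂ =>
        exact h₂.2 (Relation.TransGen.lift id (fun x y (hp : ltPrime le x y) => hp.1) _ _ h₁)
  · exact fun a b c hab hbc => hab.trans hbc
end

section
/- Blocked-rule theorem: Let X be an answer set of Π containing, for rules r of a designated set C (the core rules), their defaultizations r^Δ = head(r) ← body(r), not ¬head(r). Suppose r ∈ C, body(r) is true in X, but head(r) ∉ X. Then ¬head(r) ∈ X, and there exists a rule r' ∈ GR(Π,X) with head(r') = ¬head(r). -/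
universe u

/-- The defaultization of a rule: same head and positive body, with the
complement of the head added to the negative body. -/
def defaultize {α : Type u} (r : Rule α) : Rule α :=
  ⟨r.head, r.pos, r.neg ∪ {r.head.compl}⟩

/-- Blocked-rule theorem: if `X` is an answer set of `P`, which contains the
defaultizations of all core rules in `C`, and for some `r ∈ C` the body of `r`
is true in `X` but its head is not in `X`, then the complementary literal of
the head is in `X` and is the head of some generating rule. -/
theorem blocked_rule {α : Type u} (P : Set (Rule α)) (hfin : P.Finite)
    (C : Set (Rule α)) (hC : ∀ r ∈ C, defaultize r ∈ P)
    (X : Set (Lit α)) (hX : AnswerSet P X)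
    (r : Rule α) (hr : r ∈ C) (hbody : r.bodyTrue X) (hhead : r.head ∉ X) :
    r.head.compl ∈ X ∧ ∃ r' ∈ GR P X, r'.head = r.head.compl := by
  obtain ⟨hcons, hmodel, hmin⟩ := hX
  obtain ⟨hpos, hneg⟩ := hbody
  -- Step 1: r.head.compl ∈ X
  have hcompl : r.head.compl ∈ X := by
    by_contra hc
    have hnegd : (defaultize r).neg ∩ X = ∅ := by
      apply Set.eq_empty_iff_forall_notMem.2
      intro L ⟨hL, hLX⟩
      rcases hL with hL | hL
      · exact Set.eq_empty_iff_forall_notMem.1 hneg L ⟨hL, hLX⟩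
      · exact hc (hL ▸ hLX)
    have : (⟨r.head, r.pos, ∅⟩ : Rule α) ∈ reduct P X :=
      ⟨defaultize r, hC r hr, hnegd, rfl⟩
    exact hhead (hmodel (⟨r.head, r.pos, ∅⟩ : Rule α) this ⟨hpos, Set.empty_inter X⟩)
  refine ⟨hcompl, ?_⟩
  -- Step 2: minimality gives a generating rule with head r.head.compl
  set Y : Set (Lit α) := X \ {r.head.compl} with hY
  have hYX : Y ⊆ X := Set.diff_subset
  have hYne : Y ≠ X := by
    intro h
    have : r.head.compl ∈ Y := h ▸ hcompl
    exact this.2 rfl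
  have hnotm : ¬ IsModel Y (reduct P X) := fun h => hYne (hmin Y hYX h)
  simp only [IsModel, not_forall] at hnotm
  obtain ⟨r'', hr''P, hr''b, hr''h⟩ := hnotm
  obtain ⟨r', hr'P, hr'neg, hr'eq⟩ := hr''P
  have hposY : r''.pos ⊆ Y := hr''b.1
  have hbX : r''.bodyTrue X := ⟨hposY.trans hYX, by rw [hr'eq]; simp⟩
  have hheadX : r''.head ∈ X := hmodel r'' ⟨r', hr'P, hr'neg, hr'eq⟩ hbX
  have hheq : r''.head = r.head.compl := by
    by_contra h
    exact hr''h ⟨hheadX, h⟩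
  refine ⟨r', ⟨hr'P, ⟨?_, hr'neg⟩⟩, ?_⟩
  · have : r'.pos = r''.pos := by rw [hr'eq]
    rw [this]; exact hposY.trans hYX
  · have : r'.head = r''.head := by rw [hr'eq]
    rw [this, hheq]
end

section
/- Composed selection characterization: let Π0 and ΠQ be ground extended logic programs with Π0 independent of ΠQ, and let < be a strict partial order on ΠQ. Then X is a preferred answer set of (ΠQ ∪ Y, <) for some answer set Y of Π0 if and only if X is a preferred answer set of (Π0 ∪ ΠQ, <), provided that preference conditions (P1)–(P3) involve only rules of ΠQ and facts of Y are unrelated under <. -/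
universe u

/-- The heads of the rules enumerated strictly before position `i`. -/
def headsBefore {α : Type u} {n : ℕ} (e : Fin n → Rule α) (i : Fin n) : Set (Lit α) :=
  {L | ∃ k : Fin n, k < i ∧ (e k).head = L}

/-- `e` is an enumeration of the generating rules GR(P,X) witnessing preference,
i.e., satisfying conditions (P1)–(P3). -/
def IsWitnessingEnum {α : Type u} (P : Set (Rule α)) (lt : Rule α → Rule α → Prop)
    (X : Set (Lit α)) {n : ℕ} (e : Fin n → Rule α) : Prop :=
  Function.Injective e ∧ Set.range e = GR P X ∧
  (∀ i : Fin n, (e i).pos ⊆ headsBefore e i) ∧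
  (∀ i j : Fin n, lt (e i) (e j) → j < i) ∧
  (∀ (i : Fin n) (r' : Rule α), lt (e i) r' → r' ∈ P → r' ∉ GR P X →
      ¬ r'.pos ⊆ X ∨ (r'.neg ∩ headsBefore e i).Nonempty)

/-- `X` is a preferred answer set of the prioritized program `(P, lt)`. -/
def PreferredAnswerSet {α : Type u} (P : Set (Rule α)) (lt : Rule α → Rule α → Prop)
    (X : Set (Lit α)) : Prop :=
  AnswerSet P X ∧ ∃ (n : ℕ) (e : Fin n → Rule α), IsWitnessingEnum P lt X e


namespace CompSel

variable {α : Type u}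

/-- Fact rules from a set of literals. -/
def facts (Y : Set (Lit α)) : Set (Rule α) := (fun L => (⟨L, ∅, ∅⟩ : Rule α)) '' Y

lemma reduct_union (P Q : Set (Rule α)) (X : Set (Lit α)) :
    reduct (P ∪ Q) X = reduct P X ∪ reduct Q X := by
  ext r; simp only [reduct, Set.mem_union, Set.mem_setOf_eq]
  constructor
  · rintro ⟨s, hs | hs, h⟩
    · exact Or.inl ⟨s, hs, h⟩
    · exact Or.inr ⟨s, hs, h⟩
  · rintro (⟨s, hs, h⟩ | ⟨s, hs, h⟩)
    · exact ⟨s, Or.inl hs, h⟩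
    · exact ⟨s, Or.inr hs, h⟩

lemma GR_union (P Q : Set (Rule α)) (X : Set (Lit α)) :
    GR (P ∪ Q) X = GR P X ∪ GR Q X := by
  ext r; simp only [GR, Set.mem_union, Set.mem_setOf_eq]; tauto

lemma fact_bodyTrue (L : Lit α) (X : Set (Lit α)) : (⟨L, ∅, ∅⟩ : Rule α).bodyTrue X :=
  ⟨Set.empty_subset _, Set.empty_inter _⟩

lemma GR_facts (Y X : Set (Lit α)) : GR (facts Y) X = facts Y := by
  ext r
  simp only [GR, Set.mem_setOf_eq]
  refine ⟨fun h => h.1, fun h => ⟨h, ?_⟩⟩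
  obtain ⟨L, _, rfl⟩ := h
  exact fact_bodyTrue L X

lemma reduct_facts (Y X : Set (Lit α)) : reduct (facts Y) X = facts Y := by
  ext r
  simp only [reduct, facts, Set.mem_setOf_eq, Set.mem_image]
  constructor
  · rintro ⟨s, ⟨L, hL, rfl⟩, -, rfl⟩
    exact ⟨L, hL, rfl⟩
  · rintro ⟨L, hL, rfl⟩
    exact ⟨⟨L, ∅, ∅⟩, ⟨L, hL, rfl⟩, Set.empty_inter _, rfl⟩

lemma heads_in {P : Set (Rule α)} {X : Set (Lit α)} (h : AnswerSet P X) :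
    ∀ r ∈ GR P X, r.head ∈ X := by
  rintro r ⟨hrP, hpos, hneg⟩
  exact h.2.1 ⟨r.head, r.pos, ∅⟩ ⟨r, hrP, hneg, rfl⟩ ⟨hpos, Set.empty_inter _⟩

lemma support {P : Set (Rule α)} {X : Set (Lit α)} (h : AnswerSet P X) {L : Lit α}
    (hL : L ∈ X) : ∃ r ∈ GR P X, r.head = L := by
  by_contra hno
  push_neg at hno
  have hmod : IsModel (X \ {L}) (reduct P X) := by
    rintro r' ⟨r, hrP, hneg, rfl⟩ ⟨hpos, -⟩
    have hposX : r.pos ⊆ X := hpos.trans Set.diff_subset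
    have hhead : r.head ∈ X :=
      h.2.1 ⟨r.head, r.pos, ∅⟩ ⟨r, hrP, hneg, rfl⟩ ⟨hposX, Set.empty_inter _⟩
    refine ⟨hhead, fun hmem => ?_⟩
    have : r.head = L := hmem
    exact hno r ⟨hrP, hposX, hneg⟩ this
  have heq := h.2.2 _ Set.diff_subset hmod
  rw [← heq] at hL
  exact hL.2 rfl

/-- A P1-respecting enumeration (as a list) of the generating rules of an answer set. -/
lemma greedy {P : Set (Rule α)} {Y : Set (Lit α)} (hP : P.Finite) (hY : AnswerSet P Y) :
    ∃ l : List (Rule α), l.Nodup ∧ (∀ r, r ∈ l ↔ r ∈ GR P Y) ∧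
      ∀ i : Fin l.length, (l.get i).pos ⊆ {L | ∃ j : Fin l.length, j < i ∧ (l.get j).head = L} := by
  classical
  have hGfin : (GR P Y).Finite := hP.subset (fun r hr => hr.1)
  have key : ∀ n : ℕ, ∀ l : List (Rule α), l.Nodup → (∀ r ∈ l, r ∈ GR P Y) →
      (∀ i : Fin l.length, (l.get i).pos ⊆ {L | ∃ j : Fin l.length, j < i ∧ (l.get j).head = L}) →
      (hGfin.toFinset.filter (fun r => r ∉ l)).card < n →
      ∃ l' : List (Rule α), l'.Nodup ∧ (∀ r, r ∈ l' ↔ r ∈ GR P Y) ∧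
        ∀ i : Fin l'.length, (l'.get i).pos ⊆
          {L | ∃ j : Fin l'.length, j < i ∧ (l'.get j).head = L} := by
    intro n
    induction n with
    | zero => intro l _ _ _ h; exact absurd h (Nat.not_lt_zero _)
    | succ n ih =>
      intro l hnd hsub hP1 hcard
      by_cases hfull : ∀ r ∈ GR P Y, r ∈ l
      · exact ⟨l, hnd, fun r => ⟨hsub r, hfull r⟩, hP1⟩
      · push_neg at hfull
        by_cases hpick : ∃ r, r ∈ GR P Y ∧ r ∉ l ∧ r.pos ⊆ {L | ∃ r' ∈ l, r'.head = L}
        · obtain ⟨r, hrGR, hrl, hrpos⟩ := hpick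
          refine ih (l ++ [r]) ?_ ?_ ?_ ?_
          · refine List.nodup_append'.mpr ⟨hnd, List.nodup_singleton r, ?_⟩
            intro a ha hb
            rw [List.mem_singleton] at hb
            exact hrl (hb ▸ ha)
          · intro s hs
            rcases List.mem_append.mp hs with h | h
            · exact hsub s h
            · rw [List.mem_singleton] at h; exact h ▸ hrGR
          · intro i
            have hlen : (l ++ [r]).length = l.length + 1 := by simp
            rcases Nat.lt_or_ge i.val l.length with hi | hi
            · have hget : (l ++ [r]).get i = l.get ⟨i.val, hi⟩ := by
                simp [List.get_eq_getElem, List.getElem_append_left hi]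
              rw [hget]
              intro L hL
              obtain ⟨j, hj, hjh⟩ := hP1 ⟨i.val, hi⟩ hL
              refine ⟨⟨j.val, by omega⟩, hj, ?_⟩
              have : (l ++ [r]).get ⟨j.val, by omega⟩ = l.get j := by
                simp [List.get_eq_getElem, List.getElem_append_left j.isLt]
              rw [this]; exact hjh
            · have hi' : i.val = l.length := by
                have := i.isLt; omega
              have hget : (l ++ [r]).get i = r := by
                simp [List.get_eq_getElem, List.getElem_append_right hi, hi']
              rw [hget]
              intro L hL
              obtain ⟨r', hr'l, hhd⟩ := hrpos hL
              obtain ⟨j, hjget⟩ := List.mem_iff_get.mp hr'l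
              refine ⟨⟨j.val, by omega⟩, by
                show j.val < i.val
                omega, ?_⟩
              have : (l ++ [r]).get ⟨j.val, by omega⟩ = l.get j := by
                simp [List.get_eq_getElem, List.getElem_append_left j.isLt]
              rw [this, hjget]; exact hhd
          · have hnew_sub : hGfin.toFinset.filter (fun s => s ∉ l ++ [r]) ⊆
                hGfin.toFinset.filter (fun s => s ∉ l) := by
              intro s hs
              rw [Finset.mem_filter] at hs ⊢
              exact ⟨hs.1, fun h => hs.2 (List.mem_append.mpr (Or.inl h))⟩
            have hrmem : r ∈ hGfin.toFinset.filter (fun s => s ∉ l) := by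
              rw [Finset.mem_filter, Set.Finite.mem_toFinset]; exact ⟨hrGR, hrl⟩
            have hrnot : r ∉ hGfin.toFinset.filter (fun s => s ∉ l ++ [r]) := by
              rw [Finset.mem_filter]
              rintro ⟨-, h⟩
              exact h (List.mem_append.mpr (Or.inr (List.mem_singleton.mpr rfl)))
            have hlt := Finset.card_lt_card (Finset.ssubset_iff_of_subset hnew_sub |>.mpr
              ⟨r, hrmem, hrnot⟩)
            omega
        · exfalso
          push_neg at hpick
          have hHY : {L | ∃ r' ∈ l, r'.head = L} ⊆ Y := by
            rintro L ⟨r', hr'l, rfl⟩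
            exact heads_in hY r' (hsub r' hr'l)
          have hmod : IsModel {L | ∃ r' ∈ l, r'.head = L} (reduct P Y) := by
            rintro s ⟨r, hrP, hneg, rfl⟩ ⟨hpos, -⟩
            have hposH : r.pos ⊆ {L | ∃ r' ∈ l, r'.head = L} := hpos
            have hposY : r.pos ⊆ Y := fun L hL => hHY (hposH hL)
            have hrGR : r ∈ GR P Y := ⟨hrP, hposY, hneg⟩
            by_cases hrl : r ∈ l
            · exact ⟨r, hrl, rfl⟩
            · exact absurd hposH (hpick r hrGR hrl)
          have hHeq := hY.2.2 _ hHY hmod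
          obtain ⟨r0, hr0GR, hr0l⟩ := hfull
          exact hpick r0 hr0GR hr0l (fun L hL => hHeq ▸ hr0GR.2.1 hL)
  obtain ⟨l, h1, h2, h3⟩ := key ((hGfin.toFinset.filter (fun r => r ∉ ([] : List (Rule α)))).card + 1)
    [] List.nodup_nil (by simp) (fun i => i.elim0) (Nat.lt_succ_self _)
  exact ⟨l, h1, h2, h3⟩

open Classical in
/-- Transfer of witnessing enumerations between programs sharing the `PQ` part. -/
lemma transfer {Pa Pb PQ : Set (Rule α)} {lt : Rule α → Rule α → Prop} {X : Set (Lit α)}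
    (hlt : ∀ r r', lt r r' → r ∈ PQ ∧ r' ∈ PQ)
    (hdb : ∀ r ∈ Pb, r ∉ PQ)
    (hheads : ∀ r ∈ GR Pa X, ∃ r' ∈ GR Pb X, r'.head = r.head)
    (l0 : List (Rule α)) (hl0nd : l0.Nodup) (hl0mem : ∀ r, r ∈ l0 ↔ r ∈ GR Pb X)
    (hl0P1 : ∀ i : Fin l0.length, (l0.get i).pos ⊆
        {L | ∃ j : Fin l0.length, j < i ∧ (l0.get j).head = L})
    {n : ℕ} (e : Fin n → Rule α) (he : IsWitnessingEnum (Pa ∪ PQ) lt X e) :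
    ∃ (m : ℕ) (f : Fin m → Rule α), IsWitnessingEnum (Pb ∪ PQ) lt X f := by
  obtain ⟨hinj, hrange, hp1, hp2, hp3⟩ := he
  set l : List (Rule α) := List.ofFn e with hldef
  have hllen : l.length = n := List.length_ofFn
  have hlmem : ∀ r, r ∈ l ↔ r ∈ Set.range e := fun r => List.mem_ofFn
  have hlnd : l.Nodup := List.nodup_ofFn.mpr hinj
  set lf : List (Rule α) := l.filter (fun r => decide (r ∈ PQ)) with hlfdef
  have hsl : List.Sublist lf l := List.filter_sublist
  obtain ⟨φ, hφ⟩ := List.sublist_iff_exists_fin_orderEmbedding_get_eq.mp hsl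
  have hlfnd : lf.Nodup := hlnd.filter _
  have hlfmem : ∀ r, r ∈ lf ↔ r ∈ GR PQ X := by
    intro r
    rw [hlfdef, List.mem_filter]
    simp only [decide_eq_true_eq]
    constructor
    · rintro ⟨hrl, hrPQ⟩
      have hr : r ∈ GR (Pa ∪ PQ) X := by rw [← hrange]; exact (hlmem r).mp hrl
      exact ⟨hrPQ, hr.2⟩
    · rintro ⟨hrPQ, hbody⟩
      refine ⟨(hlmem r).mpr ?_, hrPQ⟩
      rw [hrange]
      exact ⟨Or.inr hrPQ, hbody⟩
  -- the index map from lf positions to e positions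
  set ψ : Fin lf.length → Fin n := fun j => Fin.cast hllen (φ j) with hψdef
  have hψget : ∀ j : Fin lf.length, lf.get j = e (ψ j) := by
    intro j
    rw [hφ j]
    show l.get (φ j) = e (Fin.cast hllen (φ j))
    exact List.get_ofFn e (φ j)
  have hψmono : ∀ j j' : Fin lf.length, ψ j < ψ j' ↔ j < j' := by
    intro j j'
    have : ψ j < ψ j' ↔ φ j < φ j' := Iff.rfl
    rw [this, φ.lt_iff_lt]
  have hψsurj : ∀ k : Fin n, e k ∈ PQ → ∃ j : Fin lf.length, ψ j = k := by
    intro k hk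
    have hkGR : e k ∈ GR PQ X := by
      have : e k ∈ GR (Pa ∪ PQ) X := by rw [← hrange]; exact Set.mem_range_self k
      exact ⟨hk, this.2⟩
    obtain ⟨j, hj⟩ := List.mem_iff_get.mp ((hlfmem (e k)).mpr hkGR)
    exact ⟨j, hinj (by rw [← hψget j, hj])⟩
  -- the new enumeration
  set L : List (Rule α) := l0 ++ lf with hLdef
  set n0 : ℕ := l0.length with hn0def
  have hLlen : L.length = n0 + lf.length := by simp [hLdef, hn0def]
  set f : Fin L.length → Rule α := L.get with hfdef
  have hgetlo : ∀ (i : Fin L.length) (h : i.val < n0), f i = l0.get ⟨i.val, h⟩ := by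
    intro i h
    simp only [hfdef, hLdef, List.get_eq_getElem]
    exact List.getElem_append_left h
  have hgethi : ∀ (i : Fin L.length) (h : n0 ≤ i.val) (j : Fin lf.length),
      j.val = i.val - n0 → f i = e (ψ j) := by
    intro i h j hj
    rw [← hψget j]
    simp only [hfdef, hLdef, List.get_eq_getElem]
    have := i.isLt
    rw [List.getElem_append_right h]
    congr 1
    omega
  -- heads transfer
  have hA : ∀ (j : Fin lf.length) (i : Fin L.length), i.val = n0 + j.val →
      headsBefore e (ψ j) ⊆ headsBefore f i := by
    rintro j i hij L' ⟨k, hk, hkh⟩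
    by_cases hkPQ : e k ∈ PQ
    · obtain ⟨j', hj'⟩ := hψsurj k hkPQ
      have hj'j : j' < j := (hψmono j' j).mp (by rw [hj']; exact hk)
      have hlt1 : n0 + j'.val < L.length := by
        have := j.isLt; have := i.isLt
        have hjj : j'.val < j.val := hj'j
        omega
      refine ⟨⟨n0 + j'.val, hlt1⟩, ?_, ?_⟩
      · show n0 + j'.val < i.val
        have hjj : j'.val < j.val := hj'j
        omega
      · have := hgethi ⟨n0 + j'.val, hlt1⟩ (by simp) j' (by simp)
        rw [this, hj', hkh]
    · have hkGR : e k ∈ GR (Pa ∪ PQ) X := by rw [← hrange]; exact Set.mem_range_self k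
      have hkPa : e k ∈ Pa := by
        rcases hkGR.1 with h | h
        · exact h
        · exact absurd h hkPQ
      obtain ⟨r', hr'GR, hr'h⟩ := hheads (e k) ⟨hkPa, hkGR.2⟩
      obtain ⟨q, hq⟩ := List.mem_iff_get.mp ((hl0mem r').mpr hr'GR)
      have hq1 : q.val < L.length := by
        have := q.isLt; have := i.isLt
        omega
      refine ⟨⟨q.val, hq1⟩, ?_, ?_⟩
      · show q.val < i.val
        have := q.isLt
        omega
      · rw [hgetlo ⟨q.val, hq1⟩ q.isLt]
        have : (⟨q.val, q.isLt⟩ : Fin l0.length) = q := rfl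
        rw [this, hq, hr'h, hkh]
  -- suffix positions
  have hsuffix : ∀ i : Fin L.length, f i ∈ PQ → ∃ j : Fin lf.length,
      i.val = n0 + j.val ∧ f i = e (ψ j) := by
    intro i hiQ
    have hge : n0 ≤ i.val := by
      by_contra h
      push_neg at h
      have : f i ∈ GR Pb X := (hl0mem _).mp (by rw [hgetlo i h]; exact List.get_mem l0 ⟨i.val, h⟩)
      exact hdb _ this.1 hiQ
    have hj1 : i.val - n0 < lf.length := by have := i.isLt; omega
    exact ⟨⟨i.val - n0, hj1⟩, by simp; omega, hgethi i hge _ rfl⟩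
  refine ⟨L.length, f, List.nodup_iff_injective_get.mp ?_, ?_, ?_, ?_, ?_⟩
  · -- Nodup L
    rw [hLdef]
    refine List.nodup_append'.mpr ⟨hl0nd, hlfnd, ?_⟩
    intro a ha hb
    have h1 : a ∈ GR Pb X := (hl0mem a).mp ha
    have h2 : a ∈ GR PQ X := (hlfmem a).mp hb
    exact hdb a h1.1 h2.1
  · -- range
    ext r
    simp only [Set.mem_range]
    constructor
    · rintro ⟨i, rfl⟩
      have : f i ∈ L := List.get_mem L i
      rcases List.mem_append.mp this with h | h
      · rw [GR_union]; exact Or.inl ((hl0mem _).mp h)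
      · rw [GR_union]; exact Or.inr ((hlfmem _).mp h)
    · intro hr
      rw [GR_union] at hr
      have : r ∈ L := by
        rcases hr with h | h
        · exact List.mem_append.mpr (Or.inl ((hl0mem r).mpr h))
        · exact List.mem_append.mpr (Or.inr ((hlfmem r).mpr h))
      obtain ⟨i, hi⟩ := List.mem_iff_get.mp this
      exact ⟨i, hi⟩
  · -- P1
    intro i
    rcases Nat.lt_or_ge i.val n0 with hi | hi
    · rw [hgetlo i hi]
      intro L' hL'
      obtain ⟨jj, hjj, hjjh⟩ := hl0P1 ⟨i.val, hi⟩ hL'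
      have hjj1 : jj.val < L.length := by have := jj.isLt; have := i.isLt; omega
      refine ⟨⟨jj.val, hjj1⟩, ?_, ?_⟩
      · show jj.val < i.val
        exact hjj
      · rw [hgetlo ⟨jj.val, hjj1⟩ (lt_trans hjj hi)]
        exact hjjh
    · have hj1 : i.val - n0 < lf.length := by have := i.isLt; omega
      set j : Fin lf.length := ⟨i.val - n0, hj1⟩ with hjd
      have hfi : f i = e (ψ j) := hgethi i hi j rfl
      rw [hfi]
      exact fun L' hL' => hA j i (by simp [hjd]; omega) (hp1 (ψ j) hL')
  · -- P2
    intro i j hij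
    obtain ⟨a, ha1, ha2⟩ := hsuffix i (hlt _ _ hij).1
    obtain ⟨b, hb1, hb2⟩ := hsuffix j (hlt _ _ hij).2
    rw [ha2, hb2] at hij
    have := hp2 _ _ hij
    have hba : (ψ b) < (ψ a) := this
    have : b < a := (hψmono b a).mp hba
    show j.val < i.val
    have hb : b.val < a.val := this
    omega
  · -- P3
    intro i r' hir' hr'B hr'nGR
    obtain ⟨a, ha1, ha2⟩ := hsuffix i (hlt _ _ hir').1
    have hr'Q : r' ∈ PQ := (hlt _ _ hir').2
    have hr'n : r' ∉ GR (Pa ∪ PQ) X := by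
      intro hc
      exact hr'nGR (by rw [GR_union]; exact Or.inr ⟨hr'Q, hc.2⟩)
    rw [ha2] at hir'
    rcases hp3 (ψ a) r' hir' (Or.inr hr'Q) hr'n with h | ⟨L', hL'⟩
    · exact Or.inl h
    · exact Or.inr ⟨L', hL'.1, hA a i ha1 hL'.2⟩

/-- The literals occurring in rules of `P0`. -/
def lits (P0 : Set (Rule α)) : Set (Lit α) :=
  {L | ∃ r0 ∈ P0, L = r0.head ∨ L ∈ r0.pos ∨ L ∈ r0.neg}

lemma body_eq {P0 : Set (Rule α)} {X Y : Set (Lit α)}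
    (hYX : Y ⊆ X) (hXY : ∀ L ∈ lits P0, L ∈ X → L ∈ Y) :
    reduct P0 X = reduct P0 Y ∧ GR P0 X = GR P0 Y := by
  have hpos : ∀ r ∈ P0, (r.pos ⊆ X ↔ r.pos ⊆ Y) := by
    intro r hr
    constructor
    · intro h L hL
      exact hXY L ⟨r, hr, Or.inr (Or.inl hL)⟩ (h hL)
    · intro h L hL
      exact hYX (h hL)
  have hneg : ∀ r ∈ P0, (r.neg ∩ X = ∅ ↔ r.neg ∩ Y = ∅) := by
    intro r hr
    constructor
    · intro h
      rw [Set.eq_empty_iff_forall_notMem] at h ⊢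
      intro L hL
      exact h L ⟨hL.1, hYX hL.2⟩
    · intro h
      rw [Set.eq_empty_iff_forall_notMem] at h ⊢
      intro L hL
      exact h L ⟨hL.1, hXY L ⟨r, hr, Or.inr (Or.inr hL.1)⟩ hL.2⟩
  constructor
  · ext s
    simp only [reduct, Set.mem_setOf_eq]
    constructor
    · rintro ⟨r, hr, hn, rfl⟩
      exact ⟨r, hr, (hneg r hr).mp hn, rfl⟩
    · rintro ⟨r, hr, hn, rfl⟩
      exact ⟨r, hr, (hneg r hr).mpr hn, rfl⟩
  · ext r
    simp only [GR, Set.mem_setOf_eq, Rule.bodyTrue]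
    constructor
    · rintro ⟨hr, hp, hn⟩
      exact ⟨hr, (hpos r hr).mp hp, (hneg r hr).mp hn⟩
    · rintro ⟨hr, hp, hn⟩
      exact ⟨hr, (hpos r hr).mpr hp, (hneg r hr).mpr hn⟩

lemma fwd {P0 PQ : Set (Rule α)} {X Y : Set (Lit α)}
    (hnohead : ∀ L ∈ lits P0, ∀ rQ ∈ PQ, rQ.head ≠ L)
    (hY : AnswerSet P0 Y) (hX : AnswerSet (PQ ∪ facts Y) X) :
    Y ⊆ X ∧ GR P0 X = GR P0 Y ∧ AnswerSet (P0 ∪ PQ) X := by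
  have hYX : Y ⊆ X := by
    intro L hL
    exact hX.2.1 ⟨L, ∅, ∅⟩
      (by rw [reduct_union, reduct_facts]; exact Or.inr ⟨L, hL, rfl⟩) (fact_bodyTrue L X)
  have hXY : ∀ L ∈ lits P0, L ∈ X → L ∈ Y := by
    intro L hL0 hLX
    obtain ⟨r, hrGR, hrh⟩ := support hX hLX
    rcases hrGR.1 with hrPQ | hrfacts
    · exact absurd hrh (hnohead L hL0 r hrPQ)
    · obtain ⟨L', hL', rfl⟩ := hrfacts
      exact hrh ▸ hL'
  obtain ⟨hred, hGReq⟩ := body_eq hYX hXY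
  refine ⟨hYX, hGReq, hX.1, ?_, ?_⟩
  · intro s hs hb
    rw [reduct_union] at hs
    rcases hs with hs | hs
    · rw [hred] at hs
      obtain ⟨r, hr, hn, rfl⟩ := hs
      have hposY : r.pos ⊆ Y := fun L hL => hXY L ⟨r, hr, Or.inr (Or.inl hL)⟩ (hb.1 hL)
      exact hYX (hY.2.1 ⟨r.head, r.pos, ∅⟩ ⟨r, hr, hn, rfl⟩ ⟨hposY, Set.empty_inter _⟩)
    · exact hX.2.1 s (by rw [reduct_union, reduct_facts]; exact Or.inl hs) hb
  · intro Z hZX hZmod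
    have hYZ : Y ⊆ Z := by
      have hWmod : IsModel (Z ∩ Y) (reduct P0 Y) := by
        rintro s ⟨r, hr, hn, rfl⟩ ⟨hp, -⟩
        have hsX : (⟨r.head, r.pos, ∅⟩ : Rule α) ∈ reduct (P0 ∪ PQ) X := by
          rw [reduct_union]
          left
          rw [hred]
          exact ⟨r, hr, hn, rfl⟩
        have hZhead : r.head ∈ Z :=
          hZmod ⟨r.head, r.pos, ∅⟩ hsX ⟨fun L hL => (hp hL).1, Set.empty_inter _⟩
        exact ⟨hZhead, hXY r.head ⟨r, hr, Or.inl rfl⟩ (hZX hZhead)⟩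
      have heq := hY.2.2 (Z ∩ Y) Set.inter_subset_right hWmod
      intro L hL
      rw [← heq] at hL
      exact hL.1
    have hZmod' : IsModel Z (reduct (PQ ∪ facts Y) X) := by
      intro s hs hb
      rw [reduct_union, reduct_facts] at hs
      rcases hs with hs | hs
      · exact hZmod s (by rw [reduct_union]; exact Or.inr hs) hb
      · obtain ⟨L, hL, rfl⟩ := hs
        exact hYZ hL
    exact hX.2.2 Z hZX hZmod'

lemma bwd {P0 PQ : Set (Rule α)} {X : Set (Lit α)}
    (hnohead : ∀ L ∈ lits P0, ∀ rQ ∈ PQ, rQ.head ≠ L)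
    (hX : AnswerSet (P0 ∪ PQ) X) :
    AnswerSet P0 (X ∩ lits P0) ∧ AnswerSet (PQ ∪ facts (X ∩ lits P0)) X ∧
      GR P0 X = GR P0 (X ∩ lits P0) := by
  set Y := X ∩ lits P0 with hYdef
  have hYX : Y ⊆ X := Set.inter_subset_left
  have hXY : ∀ L ∈ lits P0, L ∈ X → L ∈ Y := fun L h1 h2 => ⟨h2, h1⟩
  obtain ⟨hred, hGReq⟩ := body_eq hYX hXY
  have hYlits : Y ⊆ lits P0 := Set.inter_subset_right
  have hcons : Consistent Y := fun a h => hX.1 a ⟨hYX h.1, hYX h.2⟩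
  have hmodY : IsModel Y (reduct P0 Y) := by
    rintro s ⟨r, hr, hn, rfl⟩ ⟨hp, -⟩
    have hX' : r.head ∈ X := hX.2.1 ⟨r.head, r.pos, ∅⟩
      (by rw [reduct_union]; left; rw [hred]; exact ⟨r, hr, hn, rfl⟩)
      ⟨fun L hL => hYX (hp hL), Set.empty_inter _⟩
    exact ⟨hX', ⟨r, hr, Or.inl rfl⟩⟩
  have hminY : ∀ Z, Z ⊆ Y → IsModel Z (reduct P0 Y) → Z = Y := by
    intro Z hZY hZmod
    have hWX : Z ∪ (X \ lits P0) ⊆ X := by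
      rintro L (hL | hL)
      · exact hYX (hZY hL)
      · exact hL.1
    have hWmod : IsModel (Z ∪ (X \ lits P0)) (reduct (P0 ∪ PQ) X) := by
      intro s hs hb
      rw [reduct_union] at hs
      rcases hs with hs | hs
      · rw [hred] at hs
        obtain ⟨r, hr, hn, rfl⟩ := hs
        have hpZ : r.pos ⊆ Z := by
          intro L hL
          rcases hb.1 hL with h | h
          · exact h
          · exact absurd ⟨r, hr, Or.inr (Or.inl hL)⟩ h.2
        exact Or.inl (hZmod ⟨r.head, r.pos, ∅⟩ ⟨r, hr, hn, rfl⟩ ⟨hpZ, Set.empty_inter _⟩)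
      · obtain ⟨r, hr, hn, rfl⟩ := hs
        have hheadX : r.head ∈ X := hX.2.1 ⟨r.head, r.pos, ∅⟩
          (by rw [reduct_union]; right; exact ⟨r, hr, hn, rfl⟩)
          ⟨fun L hL => hWX (hb.1 hL), Set.empty_inter _⟩
        exact Or.inr ⟨hheadX, fun hc => hnohead r.head hc r hr rfl⟩
    have hWeq := hX.2.2 _ hWX hWmod
    apply Set.Subset.antisymm hZY
    intro L hL
    have hLX : L ∈ X := hYX hL
    rw [← hWeq] at hLX
    rcases hLX with h | h
    · exact h
    · exact absurd (hYlits hL) h.2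
  have hmodX : IsModel X (reduct (PQ ∪ facts Y) X) := by
    intro s hs hb
    rw [reduct_union, reduct_facts] at hs
    rcases hs with hs | hs
    · exact hX.2.1 s (by rw [reduct_union]; exact Or.inr hs) hb
    · obtain ⟨L, hL, rfl⟩ := hs
      exact hYX hL
  have hminX : ∀ Z, Z ⊆ X → IsModel Z (reduct (PQ ∪ facts Y) X) → Z = X := by
    intro Z hZX hZmod
    have hYZ : Y ⊆ Z := fun L hL => hZmod ⟨L, ∅, ∅⟩
      (by rw [reduct_union, reduct_facts]; exact Or.inr ⟨L, hL, rfl⟩) (fact_bodyTrue L Z)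
    apply hX.2.2 Z hZX
    intro s hs hb
    rw [reduct_union] at hs
    rcases hs with hs | hs
    · obtain ⟨r, hr, hn, rfl⟩ := hs
      have hheadX : r.head ∈ X := hX.2.1 ⟨r.head, r.pos, ∅⟩
        (by rw [reduct_union]; left; exact ⟨r, hr, hn, rfl⟩)
        ⟨fun L hL => hZX (hb.1 hL), Set.empty_inter _⟩
      exact hYZ ⟨hheadX, ⟨r, hr, Or.inl rfl⟩⟩
    · exact hZmod s (by rw [reduct_union, reduct_facts]; exact Or.inl hs) hb
  exact ⟨⟨hcons, hmodY, hminY⟩, ⟨hX.1, hmodX, hminX⟩, hGReq⟩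

end CompSel


/-- Composed selection characterization: if `P0` is independent of `PQ` and the
strict partial order `lt` relates only rules of `PQ` (facts stemming from
answer sets of `P0` being unrelated), then `X` is a preferred answer set of
`(PQ ∪ Y, lt)` for some answer set `Y` of `P0` iff `X` is a preferred answer
set of `(P0 ∪ PQ, lt)`. -/
theorem composed_selection {α π : Type u} (pred : α → π)
    (P0 PQ : Set (Rule α)) (h0 : P0.Finite) (hQ : PQ.Finite)
    (lt : Rule α → Rule α → Prop)
    (hirr : ∀ r, ¬ lt r r) (htrans : ∀ a b c, lt a b → lt b c → lt a c)
    (hltQ : ∀ r r', lt r r' → r ∈ PQ ∧ r' ∈ PQ)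
    (hfactsUnrel : ∀ Y : Set (Lit α), AnswerSet P0 Y → ∀ L ∈ Y, ∀ r : Rule α,
      ¬ lt (⟨L, ∅, ∅⟩ : Rule α) r ∧ ¬ lt r (⟨L, ∅, ∅⟩ : Rule α))
    (hind : ∀ rQ ∈ PQ, ∀ r0 ∈ P0,
      ∀ L ∈ ({r0.head} ∪ r0.pos ∪ r0.neg : Set (Lit α)),
        pred L.atom ≠ pred rQ.head.atom)
    (X : Set (Lit α)) :
    (∃ Y : Set (Lit α), AnswerSet P0 Y ∧
        PreferredAnswerSet (PQ ∪ (fun L => (⟨L, ∅, ∅⟩ : Rule α)) '' Y) lt X) ↔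
      PreferredAnswerSet (P0 ∪ PQ) lt X := by
  classical
  have hnohead : ∀ L ∈ CompSel.lits P0, ∀ rQ ∈ PQ, rQ.head ≠ L := by
    intro L hL rQ hrQ hEq
    obtain ⟨r0, hr0, hcase⟩ := hL
    have hmem : L ∈ ({r0.head} ∪ r0.pos ∪ r0.neg : Set (Lit α)) := by
      rcases hcase with h | h | h
      · exact Or.inl (Or.inl h)
      · exact Or.inl (Or.inr h)
      · exact Or.inr h
    exact hind rQ hrQ r0 hr0 L hmem (by rw [hEq])
  have hdbP0 : ∀ r ∈ P0, r ∉ PQ := fun r hr hrQ =>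
    hnohead r.head ⟨r, hr, Or.inl rfl⟩ r hrQ rfl
  constructor
  · rintro ⟨Y, hY, hXas, n, e, he⟩
    have hXas' : AnswerSet (PQ ∪ CompSel.facts Y) X := hXas
    obtain ⟨hYX, hGReq, hXasB⟩ := CompSel.fwd hnohead hY hXas'
    obtain ⟨l0, hl0nd, hl0mem, hl0P1⟩ := CompSel.greedy h0 hY
    have hl0mem' : ∀ r, r ∈ l0 ↔ r ∈ GR P0 X := by
      intro r
      rw [hl0mem r, hGReq]
    have hheads : ∀ r ∈ GR (CompSel.facts Y) X, ∃ r' ∈ GR P0 X, r'.head = r.head := by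
      intro r hr
      rw [CompSel.GR_facts] at hr
      obtain ⟨L, hL, rfl⟩ := hr
      obtain ⟨r', hr', hh⟩ := CompSel.support hY hL
      exact ⟨r', by rw [hGReq]; exact hr', hh⟩
    have he' : IsWitnessingEnum (CompSel.facts Y ∪ PQ) lt X e := by
      have : IsWitnessingEnum (PQ ∪ CompSel.facts Y) lt X e := he
      rwa [Set.union_comm] at this
    obtain ⟨m, f, hf⟩ := CompSel.transfer hltQ hdbP0 hheads l0 hl0nd hl0mem' hl0P1 e he'
    exact ⟨hXasB, m, f, hf⟩
  · rintro ⟨hXas, n, e, he⟩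
    obtain ⟨hY, hXas2, hGReq⟩ := CompSel.bwd hnohead hXas
    set Y := X ∩ CompSel.lits P0 with hYdef
    have hYfin : Y.Finite := by
      apply (h0.image Rule.head).subset
      intro L hL
      obtain ⟨r, hrGR, hh⟩ := CompSel.support hY hL
      exact ⟨r, hrGR.1, hh⟩
    have hFfin : (CompSel.facts Y).Finite := hYfin.image _
    set l0 : List (Rule α) := hFfin.toFinset.toList with hl0
    have hl0nd : l0.Nodup := Finset.nodup_toList _
    have hl0mem : ∀ r, r ∈ l0 ↔ r ∈ GR (CompSel.facts Y) X := by
      intro r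
      rw [hl0, Finset.mem_toList, Set.Finite.mem_toFinset, CompSel.GR_facts]
    have hl0P1 : ∀ i : Fin l0.length, (l0.get i).pos ⊆
        {L | ∃ j : Fin l0.length, j < i ∧ (l0.get j).head = L} := by
      intro i
      have hmem : l0.get i ∈ CompSel.facts Y := by
        have := (hl0mem (l0.get i)).mp (List.get_mem l0 i)
        rwa [CompSel.GR_facts] at this
      obtain ⟨L, hL, heq⟩ := hmem
      intro L' hL'
      rw [← heq] at hL'
      exact absurd hL' (Set.notMem_empty L')
    have hdbF : ∀ r ∈ CompSel.facts Y, r ∉ PQ := by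
      rintro r ⟨L, hL, rfl⟩ hrQ
      exact hnohead L hL.2 _ hrQ rfl
    have hheads : ∀ r ∈ GR P0 X, ∃ r' ∈ GR (CompSel.facts Y) X, r'.head = r.head := by
      intro r hr
      have hhY : r.head ∈ Y := CompSel.heads_in hY r (hGReq ▸ hr)
      exact ⟨⟨r.head, ∅, ∅⟩, by rw [CompSel.GR_facts]; exact ⟨r.head, hhY, rfl⟩, rfl⟩
    obtain ⟨m, f, hf⟩ := CompSel.transfer hltQ hdbF hheads l0 hl0nd hl0mem hl0P1 e he
    rw [Set.union_comm] at hf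
    exact ⟨Y, hY, hXas2, m, f, hf⟩
end
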